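/- arXiv:2304.03395 — 7 statements merged into one kernel-verified Lean document; each statement's English description precedes it below -/
import Mathlib

section
/- (q-analogue of Vandermonde–Chu) For all natural numbers X, Y, Z, one has the polynomial identity ∑_{j≥0} [X choose Z−j]_q · [Y choose j]_q · q^{j(X−Z+j)} = [X+Y choose Z]_q. -/
open Finset Polynomial

/-- The Gaussian binomial coefficient `[n choose k]_q`, i.e. the q-binomial
coefficient `[n]!_q / ([k]!_q [n-k]!_q)`, as a polynomial in `q` with integer
coefficients, defined via the q-Pascal recurrence. It is `0` when `k > n`. -/
noncomputable def qbinom : ℕ → ℕ → Polynomial ℤ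
  | _, 0 => 1
  | 0, _ + 1 => 0
  | n + 1, k + 1 => qbinom n k + Polynomial.X ^ (k + 1) * qbinom n (k + 1)
  termination_by n k => (n, k)

lemma qbinom_zero (n : ℕ) : qbinom n 0 = 1 := by cases n <;> rw [qbinom]

lemma qbinom_zero_succ (k : ℕ) : qbinom 0 (k + 1) = 0 := by rw [qbinom]

lemma qbinom_succ (n k : ℕ) :
    qbinom (n + 1) (k + 1) = qbinom n k + Polynomial.X ^ (k + 1) * qbinom n (k + 1) := by
  rw [qbinom]

lemma qbinom_eq_zero : ∀ {n k : ℕ}, n < k → qbinom n k = 0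
  | 0, k + 1, _ => qbinom_zero_succ k
  | n + 1, k + 1, h => by
    rw [qbinom_succ, qbinom_eq_zero (show n < k by omega),
      qbinom_eq_zero (show n < k + 1 by omega)]
    ring

lemma one_add_X_mul (n : ℕ) :
    1 + Polynomial.X * qbinom n 1 = Polynomial.X ^ n + qbinom n 1 := by
  induction n with
  | zero => rw [qbinom_zero_succ]; ring
  | succ n ih =>
    rw [qbinom_succ, qbinom_zero]
    linear_combination Polynomial.X * ih

lemma qbinom_pascal' : ∀ n k : ℕ,
    qbinom (n + 1) (k + 1) =
      Polynomial.X ^ (n - k) * qbinom n k + qbinom n (k + 1) := by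
  intro n
  induction n with
  | zero =>
    intro k
    cases k with
    | zero => simp [qbinom_succ, qbinom_zero, qbinom_zero_succ]
    | succ k => simp [qbinom_succ, qbinom_zero_succ, qbinom_eq_zero (show 0 < k + 1 by omega)]
  | succ n ih =>
    intro k
    cases k with
    | zero =>
      rw [qbinom_succ, qbinom_zero, Nat.sub_zero]
      linear_combination one_add_X_mul (n + 1)
    | succ k =>
      rcases le_or_gt n k with h | h
      · rw [qbinom_succ, qbinom_eq_zero (show n + 1 < k + 2 by omega),
          Nat.sub_eq_zero_of_le (show n + 1 ≤ k + 1 by omega)]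
        ring
      · conv_lhs => rw [qbinom_succ, ih k, ih (k + 1)]
        conv_rhs => rw [qbinom_succ n k, qbinom_succ n (k + 1)]
        rw [show n + 1 - (k + 1) = n - k from by omega]
        have e1 : (Polynomial.X : Polynomial ℤ) ^ (k + 1 + 1) * Polynomial.X ^ (n - (k + 1))
            = Polynomial.X ^ (n + 1) := by
          rw [← pow_add]; congr 1; omega
        have e2 : (Polynomial.X : Polynomial ℤ) ^ (n - k) * Polynomial.X ^ (k + 1)
            = Polynomial.X ^ (n + 1) := by
          rw [← pow_add]; congr 1; omega
        linear_combination qbinom n (k + 1) * e1 - qbinom n (k + 1) * e2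

/-- q-analogue of the Vandermonde–Chu identity:
`∑_{j ≥ 0} [X choose Z-j]_q [Y choose j]_q q^{j(X-Z+j)} = [X+Y choose Z]_q`.
All terms with `j > Z` vanish (negative lower index), so the sum is over
`0 ≤ j ≤ Z`; the exponent `j * (X - Z + j)` is written as `j * (X + j - Z)`. -/
theorem q_vandermonde_chu (X Y Z : ℕ) :
    ∑ j ∈ Finset.range (Z + 1),
      qbinom X (Z - j) * qbinom Y j * Polynomial.X ^ (j * (X + j - Z)) =
    qbinom (X + Y) Z := by
  induction Y generalizing Z with
  | zero =>
    rw [Finset.sum_range_succ']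
    simp [qbinom_zero, qbinom_zero_succ]
  | succ Y ih =>
    cases Z with
    | zero => simp [qbinom_zero]
    | succ Z =>
      rw [Finset.sum_range_succ']
      have key : ∀ j ∈ Finset.range (Z + 1),
          qbinom X (Z + 1 - (j + 1)) * qbinom (Y + 1) (j + 1) *
              Polynomial.X ^ ((j + 1) * (X + (j + 1) - (Z + 1)))
          = Polynomial.X ^ (X + Y - Z) *
              (qbinom X (Z - j) * qbinom Y j * Polynomial.X ^ (j * (X + j - Z)))
            + qbinom X (Z + 1 - (j + 1)) * qbinom Y (j + 1) *
              Polynomial.X ^ ((j + 1) * (X + (j + 1) - (Z + 1))) := by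
        intro j hj
        have hjZ : j ≤ Z := by simpa using Nat.lt_succ_iff.mp (Finset.mem_range.mp hj)
        have hs : Z + 1 - (j + 1) = Z - j := by omega
        have hs2 : X + (j + 1) - (Z + 1) = X + j - Z := by omega
        rw [hs, hs2, qbinom_pascal' Y j]
        rcases le_or_gt j Y with hy | hy
        · rcases le_or_gt (Z - j) X with hx | hx
          · have e0 : Y - j + (X + j - Z) = X + Y - Z := by omega
            have e : Y - j + (j + 1) * (X + j - Z) = X + Y - Z + j * (X + j - Z) := by
              rw [Nat.succ_mul, ← e0]; ring
            have e2 : (Polynomial.X : Polynomial ℤ) ^ (Y - j) *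
                Polynomial.X ^ ((j + 1) * (X + j - Z))
                = Polynomial.X ^ (X + Y - Z) * Polynomial.X ^ (j * (X + j - Z)) := by
              rw [← pow_add, ← pow_add, e]
            linear_combination (qbinom X (Z - j) * qbinom Y j) * e2
          · rw [qbinom_eq_zero hx]; ring
        · rw [qbinom_eq_zero hy]; ring
      rw [Finset.sum_congr rfl key, Finset.sum_add_distrib, ← Finset.mul_sum, ih Z]
      have hih := ih (Z + 1)
      rw [Finset.sum_range_succ'] at hih
      have hpas := qbinom_pascal' (X + Y) Z
      rw [show X + (Y + 1) = X + Y + 1 by omega]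
      rw [hpas, ← hih]
      simp [qbinom_zero]
      ring
end

section
/- For all positive integers a and i, one has C(3a+i, a+i) = ∑_{k≥0} ((i+3k)/(i+k)) · C(i+k, 2k) · C(3a+i, a−k) = ∑_{k≥0} [ C(i+k, 2k) + C(i+k−1, 2k−1) ] · C(3a+i, a−k). -/
/-- The binomial coefficient `C(n, k)` for integer arguments, equal to `0`
when `k < 0` or `k > n`. -/
def chooseI (n k : ℤ) : ℤ := if 0 ≤ k ∧ k ≤ n then n.toNat.choose k.toNat else 0

namespace ChooseSumAux

lemma chooseI_neg {n k : ℤ} (h : k < 0) : chooseI n k = 0 := by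
  unfold chooseI; rw [if_neg (by omega)]

lemma chooseI_gt {n k : ℤ} (h : n < k) : chooseI n k = 0 := by
  unfold chooseI; rw [if_neg (by omega)]

lemma chooseI_coe (n k : ℕ) : chooseI (n : ℤ) (k : ℤ) = (n.choose k : ℤ) := by
  unfold chooseI
  by_cases h : (k : ℤ) ≤ (n : ℤ)
  · rw [if_pos ⟨Int.natCast_nonneg k, h⟩, Int.toNat_natCast, Int.toNat_natCast]
  · rw [if_neg (by omega), Nat.choose_eq_zero_of_lt (by omega), Nat.cast_zero]

lemma chooseI_eq {n k : ℤ} (n' k' : ℕ) (hn : n = (n' : ℤ)) (hk : k = (k' : ℤ)) :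
    chooseI n k = (n'.choose k' : ℤ) := by subst hn; subst hk; exact chooseI_coe _ _

/-- The summand coefficient `C(i+k, 2k) + C(i+k-1, 2k-1)`. -/
def Dq (i k : ℕ) : ℚ :=
  ((i + k).choose (2 * k) : ℚ) + (chooseI ((i : ℤ) + k - 1) (2 * (k : ℤ) - 1) : ℚ)

/-- WZ certificate. -/
def Gq (a i k : ℕ) : ℚ :=
  -(3*(a:ℚ)+i+3) * ((i:ℚ)-k+1) * ((i:ℚ)-k+2)
    * (chooseI ((i:ℤ)+k) (2*(k:ℤ)-2) : ℚ) * (chooseI (3*(a:ℤ)+i+2) ((a:ℤ)+1-k) : ℚ)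

lemma Gq_zero (a i j : ℕ) (h : i + 1 ≤ j) : Gq a i j = 0 := by
  unfold Gq
  rcases Nat.lt_or_ge j (i+2) with h2 | h2
  · have hj : j = i+1 := by omega
    subst hj
    have hz : (i:ℚ) - (↑(i+1):ℚ) + 1 = 0 := by push_cast; ring
    rw [hz]; ring
  rcases Nat.lt_or_ge j (i+3) with h3 | h3
  · have hj : j = i+2 := by omega
    subst hj
    have hz : (i:ℚ) - (↑(i+2):ℚ) + 2 = 0 := by push_cast; ring
    rw [hz]; ring
  · rw [chooseI_gt (show (i:ℤ)+j < 2*(j:ℤ)-2 by omega)]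
    push_cast; ring

open Nat in
lemma clean0 (a i : ℕ) :
    ((a:ℚ)+i+1)*(2*(a:ℚ)+1)*(2*(a:ℚ)+2) * ((3*a+i+3).choose (a+1) : ℚ)
      = (3*(a:ℚ)+i+1)*(3*(a:ℚ)+i+2)*(3*(a:ℚ)+i+3) * ((3*a+i).choose a : ℚ)
        - (3*(a:ℚ)+i+3) * i * (i+1) * ((3*a+i+2).choose a : ℚ) := by
  have h1 : a + 1 ≤ 3*a+i+3 := by omega
  have h2 : a ≤ 3*a+i := by omega
  have h3 : a ≤ 3*a+i+2 := by omega
  rw [Nat.cast_choose ℚ h1, Nat.cast_choose ℚ h2, Nat.cast_choose ℚ h3,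
    show 3*a+i+3-(a+1) = 2*a+i+2 from by omega,
    show 3*a+i-a = 2*a+i from by omega,
    show 3*a+i+2-a = 2*a+i+2 from by omega]
  have f1 : ((3*a+i+3)! : ℚ) = (3*(a:ℚ)+i+3)*((3*a+i+2)! : ℚ) := by
    rw [show 3*a+i+3 = (3*a+i+2)+1 from by omega, Nat.factorial_succ]; push_cast; ring
  have f2 : ((3*a+i+2)! : ℚ) = (3*(a:ℚ)+i+2)*(3*(a:ℚ)+i+1)*((3*a+i)! : ℚ) := by
    rw [show 3*a+i+2 = (3*a+i+1)+1 from by omega, Nat.factorial_succ,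
      show 3*a+i+1 = (3*a+i)+1 from by omega, Nat.factorial_succ]; push_cast; ring
  have f3 : ((a+1)! : ℚ) = ((a:ℚ)+1)*((a)! : ℚ) := by
    rw [Nat.factorial_succ]; push_cast; ring
  have f4 : ((2*a+i+2)! : ℚ) = (2*(a:ℚ)+i+2)*(2*(a:ℚ)+i+1)*((2*a+i)! : ℚ) := by
    rw [show 2*a+i+2 = (2*a+i+1)+1 from by omega, Nat.factorial_succ,
      show 2*a+i+1 = (2*a+i)+1 from by omega, Nat.factorial_succ]; push_cast; ring
  rw [f1, f2, f3, f4]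
  have n1 : ((a)! : ℚ) ≠ 0 := by positivity
  have n2 : ((2*a+i)! : ℚ) ≠ 0 := by positivity
  have n3 : ((a:ℚ)+1) ≠ 0 := by positivity
  have n4 : (2*(a:ℚ)+i+2) ≠ 0 := by positivity
  have n5 : (2*(a:ℚ)+i+1) ≠ 0 := by positivity
  field_simp
  ring

open Nat in
lemma cleanEdge (a c : ℕ) :
    ((c:ℚ)+2*a+2)*(2*(a:ℚ)+1)*(2*(a:ℚ)+2)
        * (((c+2*a+2).choose (2*a+2) : ℚ) + ((c+2*a+1).choose (2*a+1) : ℚ))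
      = (4*(a:ℚ)+c+4)*((c:ℚ)+1)*((c:ℚ)+2) * ((c+2*a+2).choose (2*a) : ℚ) := by
  have h1 : 2*a+2 ≤ c+2*a+2 := by omega
  have h2 : 2*a+1 ≤ c+2*a+1 := by omega
  have h3 : 2*a ≤ c+2*a+2 := by omega
  rw [Nat.cast_choose ℚ h1, Nat.cast_choose ℚ h2, Nat.cast_choose ℚ h3,
    show c+2*a+2-(2*a+2) = c from by omega,
    show c+2*a+1-(2*a+1) = c from by omega,
    show c+2*a+2-2*a = c+2 from by omega]
  have f1 : ((c+2*a+2)! : ℚ) = ((c:ℚ)+2*a+2)*((c+2*a+1)! : ℚ) := by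
    rw [show c+2*a+2 = (c+2*a+1)+1 from by omega, Nat.factorial_succ]; push_cast; ring
  have f2 : ((2*a+2)! : ℚ) = (2*(a:ℚ)+2)*(2*(a:ℚ)+1)*((2*a)! : ℚ) := by
    rw [show 2*a+2 = (2*a+1)+1 from by omega, Nat.factorial_succ,
      show 2*a+1 = (2*a)+1 from by omega, Nat.factorial_succ]; push_cast; ring
  have f3 : ((2*a+1)! : ℚ) = (2*(a:ℚ)+1)*((2*a)! : ℚ) := by
    rw [show 2*a+1 = (2*a)+1 from by omega, Nat.factorial_succ]; push_cast; ring
  have f4 : ((c+2)! : ℚ) = ((c:ℚ)+2)*((c:ℚ)+1)*((c)! : ℚ) := by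
    rw [show c+2 = (c+1)+1 from by omega, Nat.factorial_succ, Nat.factorial_succ]; push_cast; ring
  rw [f1, f2, f3, f4]
  have n1 : ((c)! : ℚ) ≠ 0 := by positivity
  have n2 : ((2*a)! : ℚ) ≠ 0 := by positivity
  have n3 : ((c+2*a+1)! : ℚ) ≠ 0 := by positivity
  have n4 : (2*(a:ℚ)+1) ≠ 0 := by positivity
  have n5 : (2*(a:ℚ)+2) ≠ 0 := by positivity
  have n6 : ((c:ℚ)+1) ≠ 0 := by positivity
  have n7 : ((c:ℚ)+2) ≠ 0 := by positivity
  field_simp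
  ring

end ChooseSumAux
set_option maxHeartbeats 1000000 in
lemma ChooseSumAux.cleanGenMult (b c m : ℕ) :
    ((2*(m:ℚ)+2)*((c:ℚ)+1)*((c:ℚ)+2)*((b:ℚ)+1)*(2*(b:ℚ)+c+4*m+6)*(2*(b:ℚ)+c+4*m+5))
      * ( ((b:ℚ)+c+2*m+3) * (2*(b:ℚ)+2*m+3) * (2*(b:ℚ)+2*m+4)
            * (((c+2*m+2).choose (2*m+2) : ℚ) + ((c+2*m+1).choose (2*m+1) : ℚ))
            * ((3*b+c+4*m+7).choose (b+1) : ℚ)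
          - (3*(b:ℚ)+c+4*m+5) * (3*(b:ℚ)+c+4*m+6) * (3*(b:ℚ)+c+4*m+7)
            * (((c+2*m+2).choose (2*m+2) : ℚ) + ((c+2*m+1).choose (2*m+1) : ℚ))
            * ((3*b+c+4*m+4).choose b : ℚ) )
    = ((2*(m:ℚ)+2)*((c:ℚ)+1)*((c:ℚ)+2)*((b:ℚ)+1)*(2*(b:ℚ)+c+4*m+6)*(2*(b:ℚ)+c+4*m+5))
      * ( -(3*(b:ℚ)+c+4*m+7) * (c:ℚ) * ((c:ℚ)+1)
            * ((c+2*m+3).choose (2*m+2) : ℚ) * ((3*b+c+4*m+6).choose b : ℚ)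
          + (3*(b:ℚ)+c+4*m+7) * ((c:ℚ)+1) * ((c:ℚ)+2)
            * ((c+2*m+2).choose (2*m) : ℚ) * ((3*b+c+4*m+6).choose (b+1) : ℚ) ) := by
  set D1 : ℚ := ((c+2*m+2).choose (2*m+2) : ℚ) with hD1
  set U : ℚ := ((c+2*m+1).choose (2*m+1) : ℚ) with hU
  set C1 : ℚ := ((3*b+c+4*m+7).choose (b+1) : ℚ) with hC1
  set C2 : ℚ := ((3*b+c+4*m+4).choose b : ℚ) with hC2
  set C3 : ℚ := ((c+2*m+3).choose (2*m+2) : ℚ) with hC3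
  set C4 : ℚ := ((3*b+c+4*m+6).choose b : ℚ) with hC4
  set C5 : ℚ := ((c+2*m+2).choose (2*m) : ℚ) with hC5
  set C6 : ℚ := ((3*b+c+4*m+6).choose (b+1) : ℚ) with hC6
  set C8 : ℚ := ((3*b+c+4*m+5).choose b : ℚ) with hC8
  set C9 : ℚ := ((c+2*m+2).choose (2*m+1) : ℚ) with hC9
  have r1 : (2*(m:ℚ)+2) * D1 = ((c:ℚ)+2*m+2) * U := by
    have h := Nat.add_one_mul_choose_eq (c+2*m+1) (2*m+1)
    rw [show c+2*m+1+1 = c+2*m+2 from by omega, show 2*m+1+1 = 2*m+2 from by omega] at h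
    have h' := congrArg (fun x : ℕ => (x:ℚ)) h
    push_cast at h'
    rw [hD1, hU]; linear_combination -h'
  have r2 : ((b:ℚ)+1) * C1 = (3*(b:ℚ)+c+4*m+7) * C4 := by
    have h := Nat.add_one_mul_choose_eq (3*b+c+4*m+6) b
    rw [show 3*b+c+4*m+6+1 = 3*b+c+4*m+7 from by omega] at h
    have h' := congrArg (fun x : ℕ => (x:ℚ)) h
    push_cast at h'
    rw [hC1, hC4]; linear_combination -h'
  have r3 : (2*(b:ℚ)+c+4*m+6) * C4 = (3*(b:ℚ)+c+4*m+6) * C8 := by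
    have h := Nat.choose_mul_succ_eq (3*b+c+4*m+5) b
    rw [show 3*b+c+4*m+5+1 = 3*b+c+4*m+6 from by omega,
      show 3*b+c+4*m+6-b = 2*b+c+4*m+6 from by omega] at h
    have h' := congrArg (fun x : ℕ => (x:ℚ)) h
    push_cast at h'
    rw [hC4, hC8]; linear_combination -h'
  have r4 : (2*(b:ℚ)+c+4*m+5) * C8 = (3*(b:ℚ)+c+4*m+5) * C2 := by
    have h := Nat.choose_mul_succ_eq (3*b+c+4*m+4) b
    rw [show 3*b+c+4*m+4+1 = 3*b+c+4*m+5 from by omega,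
      show 3*b+c+4*m+5-b = 2*b+c+4*m+5 from by omega] at h
    have h' := congrArg (fun x : ℕ => (x:ℚ)) h
    push_cast at h'
    rw [hC8, hC2]; linear_combination -h'
  have r5 : (2*(m:ℚ)+2) * C3 = ((c:ℚ)+2*m+3) * C9 := by
    have h := Nat.add_one_mul_choose_eq (c+2*m+2) (2*m+1)
    rw [show c+2*m+2+1 = c+2*m+3 from by omega, show 2*m+1+1 = 2*m+2 from by omega] at h
    have h' := congrArg (fun x : ℕ => (x:ℚ)) h
    push_cast at h'
    rw [hC3, hC9]; linear_combination -h'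
  have r6 : ((c:ℚ)+1) * C9 = ((c:ℚ)+2*m+2) * U := by
    have h := Nat.choose_mul_succ_eq (c+2*m+1) (2*m+1)
    rw [show c+2*m+1+1 = c+2*m+2 from by omega,
      show c+2*m+2-(2*m+1) = c+1 from by omega] at h
    have h' := congrArg (fun x : ℕ => (x:ℚ)) h
    push_cast at h'
    rw [hC9, hU]; linear_combination -h'
  have r7 : (2*(m:ℚ)+1) * C9 = ((c:ℚ)+2) * C5 := by
    have h := Nat.choose_succ_right_eq (c+2*m+2) (2*m)
    rw [show c+2*m+2-2*m = c+2 from by omega] at h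
    have h' := congrArg (fun x : ℕ => (x:ℚ)) h
    push_cast at h'
    rw [hC9, hC5]; linear_combination h'
  have r8 : ((b:ℚ)+1) * C6 = (3*(b:ℚ)+c+4*m+6) * C8 := by
    have h := Nat.add_one_mul_choose_eq (3*b+c+4*m+5) b
    rw [show 3*b+c+4*m+5+1 = 3*b+c+4*m+6 from by omega] at h
    have h' := congrArg (fun x : ℕ => (x:ℚ)) h
    push_cast at h'
    rw [hC6, hC8]; linear_combination -h'
  -- composite facts
  have F3 : (2*(b:ℚ)+c+4*m+6)*(2*(b:ℚ)+c+4*m+5) * C4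
      = (3*(b:ℚ)+c+4*m+6)*(3*(b:ℚ)+c+4*m+5) * C2 := by
    linear_combination (2*(b:ℚ)+c+4*m+5) * r3 + (3*(b:ℚ)+c+4*m+6) * r4
  have F2 : ((b:ℚ)+1)*(2*(b:ℚ)+c+4*m+6)*(2*(b:ℚ)+c+4*m+5) * C1
      = (3*(b:ℚ)+c+4*m+7)*(3*(b:ℚ)+c+4*m+6)*(3*(b:ℚ)+c+4*m+5) * C2 := by
    linear_combination (2*(b:ℚ)+c+4*m+6)*(2*(b:ℚ)+c+4*m+5) * r2 + (3*(b:ℚ)+c+4*m+7) * F3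
  have F4 : (2*(m:ℚ)+2)*((c:ℚ)+1) * C3 = ((c:ℚ)+2*m+3)*((c:ℚ)+2*m+2) * U := by
    linear_combination ((c:ℚ)+1) * r5 + ((c:ℚ)+2*m+3) * r6
  have F5 : ((c:ℚ)+1)*((c:ℚ)+2) * C5 = (2*(m:ℚ)+1)*((c:ℚ)+2*m+2) * U := by
    linear_combination (-((c:ℚ)+1)) * r7 + (2*(m:ℚ)+1) * r6
  have F6 : ((b:ℚ)+1)*(2*(b:ℚ)+c+4*m+5) * C6
      = (3*(b:ℚ)+c+4*m+6)*(3*(b:ℚ)+c+4*m+5) * C2 := by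
    linear_combination (2*(b:ℚ)+c+4*m+5) * r8 + (3*(b:ℚ)+c+4*m+6) * r4
  have G1 : (2*(m:ℚ)+2)*((b:ℚ)+1)*(2*(b:ℚ)+c+4*m+6)*(2*(b:ℚ)+c+4*m+5) * (D1*C1)
      = ((c:ℚ)+2*m+2)*(3*(b:ℚ)+c+4*m+7)*(3*(b:ℚ)+c+4*m+6)*(3*(b:ℚ)+c+4*m+5) * (U*C2) := by
    linear_combination (((b:ℚ)+1)*(2*(b:ℚ)+c+4*m+6)*(2*(b:ℚ)+c+4*m+5)*C1) * r1
      + (((c:ℚ)+2*m+2)*U) * F2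
  have G4 : (2*(m:ℚ)+2)*((c:ℚ)+1)*(2*(b:ℚ)+c+4*m+6)*(2*(b:ℚ)+c+4*m+5) * (C3*C4)
      = ((c:ℚ)+2*m+3)*((c:ℚ)+2*m+2)*(3*(b:ℚ)+c+4*m+6)*(3*(b:ℚ)+c+4*m+5) * (U*C2) := by
    linear_combination ((2*(b:ℚ)+c+4*m+6)*(2*(b:ℚ)+c+4*m+5)*C4) * F4
      + (((c:ℚ)+2*m+3)*((c:ℚ)+2*m+2)*U) * F3
  have G5 : ((c:ℚ)+1)*((c:ℚ)+2)*((b:ℚ)+1)*(2*(b:ℚ)+c+4*m+5) * (C5*C6)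
      = (2*(m:ℚ)+1)*((c:ℚ)+2*m+2)*(3*(b:ℚ)+c+4*m+6)*(3*(b:ℚ)+c+4*m+5) * (U*C2) := by
    linear_combination (((b:ℚ)+1)*(2*(b:ℚ)+c+4*m+5)*C6) * F5
      + ((2*(m:ℚ)+1)*((c:ℚ)+2*m+2)*U) * F6
  linear_combination
    (((c:ℚ)+1)*((c:ℚ)+2)*(((b:ℚ)+c+2*m+3)*(2*(b:ℚ)+2*m+3)*(2*(b:ℚ)+2*m+4))) * G1
    + ((2*(m:ℚ)+2)*((c:ℚ)+1)*((c:ℚ)+2)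
        *(((b:ℚ)+c+2*m+3)*(2*(b:ℚ)+2*m+3)*(2*(b:ℚ)+2*m+4))*U) * F2
    - (((c:ℚ)+1)*((c:ℚ)+2)*((b:ℚ)+1)*(2*(b:ℚ)+c+4*m+6)*(2*(b:ℚ)+c+4*m+5)
        *((3*(b:ℚ)+c+4*m+5)*(3*(b:ℚ)+c+4*m+6)*(3*(b:ℚ)+c+4*m+7))*C2) * r1
    + ((c:ℚ)*((c:ℚ)+1)*((c:ℚ)+2)*((b:ℚ)+1)*(3*(b:ℚ)+c+4*m+7)) * G4
    - ((2*(m:ℚ)+2)*((c:ℚ)+1)*((c:ℚ)+2)*(2*(b:ℚ)+c+4*m+6)*(3*(b:ℚ)+c+4*m+7)) * G5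

namespace ChooseSumAux

set_option maxHeartbeats 1600000 in
lemma key (a i k : ℕ) (ha : 1 ≤ a) (hi : 1 ≤ i) (hk : k ≤ a + 1) :
    ((a:ℚ)+i+1) * (2*(a:ℚ)+1) * (2*(a:ℚ)+2) * Dq i k
        * (chooseI (3*(a:ℤ)+i+3) ((a:ℤ)+1-k) : ℚ)
      - (3*(a:ℚ)+i+1) * (3*(a:ℚ)+i+2) * (3*(a:ℚ)+i+3) * Dq i k
        * (chooseI (3*(a:ℤ)+i) ((a:ℤ)-k) : ℚ)
    = Gq a i (k+1) - Gq a i k := by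
  by_cases hk0 : k = 0
  · subst hk0
    have hD : Dq i 0 = 1 := by
      unfold Dq
      rw [chooseI_neg (show 2*((0:ℕ):ℤ)-1 < 0 by norm_num)]
      norm_num
    have hG0 : Gq a i 0 = 0 := by
      unfold Gq
      rw [chooseI_neg (show 2*((0:ℕ):ℤ)-2 < 0 by norm_num)]
      ring
    have e1 : chooseI (3*(a:ℤ)+i+3) ((a:ℤ)+1-((0:ℕ):ℤ)) = ((3*a+i+3).choose (a+1) : ℤ) :=
      chooseI_eq _ _ (by push_cast; try ring) (by push_cast; try ring)
    have e2 : chooseI (3*(a:ℤ)+i) ((a:ℤ)-((0:ℕ):ℤ)) = ((3*a+i).choose a : ℤ) :=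
      chooseI_eq _ _ (by push_cast; try ring) (by push_cast; try ring)
    have e3 : chooseI ((i:ℤ)+((0+1:ℕ):ℤ)) (2*((0+1:ℕ):ℤ)-2) = ((i+1).choose 0 : ℤ) :=
      chooseI_eq _ _ (by push_cast; try ring) (by push_cast; try ring)
    have e4 : chooseI (3*(a:ℤ)+i+2) ((a:ℤ)+1-((0+1:ℕ):ℤ)) = ((3*a+i+2).choose a : ℤ) :=
      chooseI_eq _ _ (by push_cast; try ring) (by push_cast; try ring)
    rw [hD, hG0]
    unfold Gq
    rw [e1, e2, e3, e4, Nat.choose_zero_right]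
    push_cast
    linear_combination clean0 a i
  by_cases hki : i + 1 ≤ k
  · have hD : Dq i k = 0 := by
      unfold Dq
      rw [Nat.choose_eq_zero_of_lt (by omega), chooseI_gt (by omega)]
      norm_num
    rw [hD, Gq_zero a i k hki, Gq_zero a i (k+1) (by omega)]
    ring
  by_cases hka : k ≤ a
  · -- generic case
    obtain ⟨m, rfl⟩ : ∃ m, k = m + 1 := ⟨k - 1, by omega⟩
    obtain ⟨c, rfl⟩ : ∃ c, i = c + (m + 1) := ⟨i - (m+1), by omega⟩
    obtain ⟨b, rfl⟩ : ∃ b, a = b + (m + 1) := ⟨a - (m+1), by omega⟩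
    have e1 : chooseI (((c+(m+1):ℕ):ℤ)+((m+1:ℕ):ℤ)-1) (2*((m+1:ℕ):ℤ)-1)
        = ((c+2*m+1).choose (2*m+1) : ℤ) :=
      chooseI_eq _ _ (by push_cast; try ring) (by push_cast; try ring)
    have e2 : chooseI (3*(((b+(m+1)):ℕ):ℤ)+((c+(m+1):ℕ):ℤ)+3) ((((b+(m+1)):ℕ):ℤ)+1-((m+1:ℕ):ℤ))
        = ((3*b+c+4*m+7).choose (b+1) : ℤ) :=
      chooseI_eq _ _ (by push_cast; try ring) (by push_cast; try ring)
    have e3 : chooseI (3*(((b+(m+1)):ℕ):ℤ)+((c+(m+1):ℕ):ℤ)) ((((b+(m+1)):ℕ):ℤ)-((m+1:ℕ):ℤ))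
        = ((3*b+c+4*m+4).choose b : ℤ) :=
      chooseI_eq _ _ (by push_cast; try ring) (by push_cast; try ring)
    have e4 : chooseI (((c+(m+1):ℕ):ℤ)+((m+1+1:ℕ):ℤ)) (2*((m+1+1:ℕ):ℤ)-2)
        = ((c+2*m+3).choose (2*m+2) : ℤ) :=
      chooseI_eq _ _ (by push_cast; try ring) (by push_cast; try ring)
    have e5 : chooseI (3*(((b+(m+1)):ℕ):ℤ)+((c+(m+1):ℕ):ℤ)+2) ((((b+(m+1)):ℕ):ℤ)+1-((m+1+1:ℕ):ℤ))
        = ((3*b+c+4*m+6).choose b : ℤ) :=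
      chooseI_eq _ _ (by push_cast; try ring) (by push_cast; try ring)
    have e6 : chooseI (((c+(m+1):ℕ):ℤ)+((m+1:ℕ):ℤ)) (2*((m+1:ℕ):ℤ)-2)
        = ((c+2*m+2).choose (2*m) : ℤ) :=
      chooseI_eq _ _ (by push_cast; try ring) (by push_cast; try ring)
    have e7 : chooseI (3*(((b+(m+1)):ℕ):ℤ)+((c+(m+1):ℕ):ℤ)+2) ((((b+(m+1)):ℕ):ℤ)+1-((m+1:ℕ):ℤ))
        = ((3*b+c+4*m+6).choose (b+1) : ℤ) :=
      chooseI_eq _ _ (by push_cast; try ring) (by push_cast; try ring)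
    unfold Dq Gq
    rw [e1, e2, e3, e4, e5, e6, e7,
      show c+(m+1)+(m+1) = c+2*m+2 from by omega,
      show 2*(m+1) = 2*m+2 from by omega]
    have hM : ((2*(m:ℚ)+2)*((c:ℚ)+1)*((c:ℚ)+2)*((b:ℚ)+1)
        *(2*(b:ℚ)+c+4*m+6)*(2*(b:ℚ)+c+4*m+5)) ≠ 0 := by positivity
    apply mul_left_cancel₀ hM
    push_cast
    linear_combination cleanGenMult b c m
  · -- k = a + 1 ≤ i
    have hk1 : k = a + 1 := by omega
    subst hk1
    obtain ⟨c, rfl⟩ : ∃ c, i = c + (a + 1) := ⟨i - (a+1), by omega⟩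
    have e1 : chooseI (3*(a:ℤ)+((c+(a+1):ℕ):ℤ)+3) ((a:ℤ)+1-((a+1:ℕ):ℤ))
        = ((4*a+c+4).choose 0 : ℤ) :=
      chooseI_eq _ _ (by push_cast; try ring) (by push_cast; try ring)
    have e2 : chooseI (3*(a:ℤ)+((c+(a+1):ℕ):ℤ)) ((a:ℤ)-((a+1:ℕ):ℤ)) = 0 :=
      chooseI_neg (by omega)
    have e3 : chooseI (3*(a:ℤ)+((c+(a+1):ℕ):ℤ)+2) ((a:ℤ)+1-((a+1+1:ℕ):ℤ)) = 0 :=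
      chooseI_neg (by omega)
    have e4 : chooseI (((c+(a+1):ℕ):ℤ)+((a+1:ℕ):ℤ)) (2*((a+1:ℕ):ℤ)-2)
        = ((c+2*a+2).choose (2*a) : ℤ) :=
      chooseI_eq _ _ (by push_cast; try ring) (by push_cast; try ring)
    have e5 : chooseI (3*(a:ℤ)+((c+(a+1):ℕ):ℤ)+2) ((a:ℤ)+1-((a+1:ℕ):ℤ))
        = ((4*a+c+3).choose 0 : ℤ) :=
      chooseI_eq _ _ (by push_cast; try ring) (by push_cast; try ring)
    have e6 : chooseI (((c+(a+1):ℕ):ℤ)+((a+1:ℕ):ℤ)-1) (2*((a+1:ℕ):ℤ)-1)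
        = ((c+2*a+1).choose (2*a+1) : ℤ) :=
      chooseI_eq _ _ (by push_cast; try ring) (by push_cast; try ring)
    unfold Dq Gq
    rw [e1, e2, e3, e4, e5, e6,
      show c+(a+1)+(a+1) = c+2*a+2 from by omega,
      show 2*(a+1) = 2*a+2 from by omega,
      Nat.choose_zero_right, Nat.choose_zero_right]
    push_cast
    linear_combination cleanEdge a c

end ChooseSumAux

namespace ChooseSumAux

lemma Dq_zero (i : ℕ) : Dq i 0 = 1 := by
  unfold Dq
  rw [chooseI_neg (show 2*((0:ℕ):ℤ)-1 < 0 by norm_num)]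
  norm_num

lemma main (i : ℕ) (hi : 1 ≤ i) : ∀ a : ℕ, 1 ≤ a →
    ∑ k ∈ Finset.range (a+1), Dq i k * ((3*a+i).choose (a-k) : ℚ)
      = ((3*a+i).choose (a+i) : ℚ) := by
  intro a ha
  induction a, ha using Nat.le_induction with
  | base =>
    rw [Finset.sum_range_succ, Finset.sum_range_succ, Finset.sum_range_zero]
    have hD0 : Dq i 0 = 1 := Dq_zero i
    have hD1 : Dq i 1 = ((i+1).choose 2 : ℚ) + (i.choose 1 : ℚ) := by
      unfold Dq
      have e : chooseI ((i:ℤ)+((1:ℕ):ℤ)-1) (2*((1:ℕ):ℤ)-1) = (i.choose 1 : ℤ) :=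
        chooseI_eq _ _ (by push_cast; try ring) (by push_cast; try ring)
      rw [e]
      norm_num
    have h1 : (i+3).choose (i+1) = (i+3).choose (1+1) := by
      have h := Nat.choose_symm (show 1+1 ≤ i+3 by omega)
      rwa [show i+3-(1+1) = i+1 from by omega] at h
    have h2 : (i+3).choose (1+1) = (i+1).choose (1+1) + ((i+1) + (i+2)) := by
      rw [show i+3 = (i+2)+1 from by omega, Nat.choose_succ_succ (i+2) 1,
        show i+2 = (i+1)+1 from by omega, Nat.choose_succ_succ (i+1) 1,
        Nat.choose_one_right, Nat.choose_one_right]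
      generalize (i+1).choose (1+1) = X
      omega
    have hch : (i+3).choose (i+1) = (i+1).choose 2 + ((i+1) + (i+2)) := by
      have := h1.trans h2
      norm_num at this ⊢
      exact this
    rw [hD0, hD1, show 3*1+i = i+3 from by omega, show 1+i = i+1 from by omega,
      show (1:ℕ)-0 = 1 from rfl, show (1:ℕ)-1 = 0 from rfl,
      Nat.choose_one_right, Nat.choose_zero_right, hch,
      show i.choose 1 = i from Nat.choose_one_right i]
    push_cast
    ring
  | succ a ha IH =>
    have hGtop : Gq a i (a+2) = 0 := by
      unfold Gq
      rw [chooseI_neg (show (a:ℤ)+1-((a+2:ℕ):ℤ) < 0 by omega)]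
      ring
    have hG0 : Gq a i 0 = 0 := by
      unfold Gq
      rw [chooseI_neg (show 2*((0:ℕ):ℤ)-2 < 0 by norm_num)]
      ring
    have tele : ∑ k ∈ Finset.range (a+2),
        (((a:ℚ)+i+1) * (2*(a:ℚ)+1) * (2*(a:ℚ)+2) * Dq i k
            * (chooseI (3*(a:ℤ)+i+3) ((a:ℤ)+1-k) : ℚ)
          - (3*(a:ℚ)+i+1) * (3*(a:ℚ)+i+2) * (3*(a:ℚ)+i+3) * Dq i k
            * (chooseI (3*(a:ℤ)+i) ((a:ℤ)-k) : ℚ)) = 0 := by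
      rw [Finset.sum_congr rfl fun k hk =>
          key a i k ha hi (by have := Finset.mem_range.mp hk; omega),
        Finset.sum_range_sub (Gq a i), hGtop, hG0]
      ring
    have hsplit : ((a:ℚ)+i+1)*(2*(a:ℚ)+1)*(2*(a:ℚ)+2)
          * (∑ k ∈ Finset.range (a+2), Dq i k * (chooseI (3*(a:ℤ)+i+3) ((a:ℤ)+1-k) : ℚ))
        = (3*(a:ℚ)+i+1)*(3*(a:ℚ)+i+2)*(3*(a:ℚ)+i+3)
          * (∑ k ∈ Finset.range (a+2), Dq i k * (chooseI (3*(a:ℤ)+i) ((a:ℤ)-k) : ℚ)) := by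
      rw [← sub_eq_zero, Finset.mul_sum, Finset.mul_sum, ← Finset.sum_sub_distrib]
      exact (Finset.sum_congr rfl fun k _ => by ring).trans tele
    have hS1 : ∑ k ∈ Finset.range (a+2), Dq i k * (chooseI (3*(a:ℤ)+i+3) ((a:ℤ)+1-k) : ℚ)
        = ∑ k ∈ Finset.range (a+1+1), Dq i k * ((3*(a+1)+i).choose (a+1-k) : ℚ) := by
      refine Finset.sum_congr rfl fun k hk => ?_
      have hk' : k < a+2 := Finset.mem_range.mp hk
      have e : chooseI (3*(a:ℤ)+i+3) ((a:ℤ)+1-k) = ((3*(a+1)+i).choose (a+1-k) : ℤ) :=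
        chooseI_eq _ _ (by push_cast; try ring) (by omega)
      rw [e]
      push_cast
      ring
    have hS2 : ∑ k ∈ Finset.range (a+2), Dq i k * (chooseI (3*(a:ℤ)+i) ((a:ℤ)-k) : ℚ)
        = ((3*a+i).choose (a+i) : ℚ) := by
      rw [Finset.sum_range_succ,
        chooseI_neg (show (a:ℤ)-((a+1:ℕ):ℤ) < 0 by omega)]
      have h : ∑ k ∈ Finset.range (a+1), Dq i k * (chooseI (3*(a:ℤ)+i) ((a:ℤ)-k) : ℚ)
          = ∑ k ∈ Finset.range (a+1), Dq i k * ((3*a+i).choose (a-k) : ℚ) := by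
        refine Finset.sum_congr rfl fun k hk => ?_
        have hk' : k < a+1 := Finset.mem_range.mp hk
        have e : chooseI (3*(a:ℤ)+i) ((a:ℤ)-k) = ((3*a+i).choose (a-k) : ℤ) :=
          chooseI_eq _ _ (by push_cast; try ring) (by omega)
        rw [e]
        norm_cast
      rw [h, IH]
      simp
    have hT : ((a:ℚ)+i+1)*(2*(a:ℚ)+1)*(2*(a:ℚ)+2) * ((3*(a+1)+i).choose ((a+1)+i) : ℚ)
        = (3*(a:ℚ)+i+1)*(3*(a:ℚ)+i+2)*(3*(a:ℚ)+i+3) * ((3*a+i).choose (a+i) : ℚ) := by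
      have t1 := Nat.add_one_mul_choose_eq (3*a+i+2) (a+i)
      rw [show 3*a+i+2+1 = 3*a+i+3 from by omega] at t1
      have t2 := Nat.choose_mul_succ_eq (3*a+i+1) (a+i)
      rw [show 3*a+i+1+1 = 3*a+i+2 from by omega,
        show 3*a+i+2-(a+i) = 2*a+2 from by omega] at t2
      have t3 := Nat.choose_mul_succ_eq (3*a+i) (a+i)
      rw [show 3*a+i+1-(a+i) = 2*a+1 from by omega] at t3
      rw [show 3*(a+1)+i = 3*a+i+3 from by omega, show (a+1)+i = a+i+1 from by omega]
      have t1' := congrArg (fun x : ℕ => (x:ℚ)) t1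
      push_cast at t1'
      have t2' := congrArg (fun x : ℕ => (x:ℚ)) t2
      push_cast at t2'
      have t3' := congrArg (fun x : ℕ => (x:ℚ)) t3
      push_cast at t3'
      linear_combination (-(2*(a:ℚ)+1)*(2*(a:ℚ)+2))*t1'
        - ((3*(a:ℚ)+i+3)*(2*(a:ℚ)+1))*t2' - ((3*(a:ℚ)+i+3)*(3*(a:ℚ)+i+2))*t3'
    have hP1 : ((a:ℚ)+i+1)*(2*(a:ℚ)+1)*(2*(a:ℚ)+2) ≠ 0 := by positivity
    apply mul_left_cancel₀ hP1
    rw [← hS1, hsplit, hS2]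
    exact hT.symm

end ChooseSumAux

/-- For positive integers `a`, `i`:
`C(3a+i, a+i) = ∑_{k ≥ 0} ((i+3k)/(i+k)) C(i+k, 2k) C(3a+i, a−k)
             = ∑_{k ≥ 0} [C(i+k, 2k) + C(i+k−1, 2k−1)] C(3a+i, a−k)`.
Terms with `k > a` vanish (negative lower index `a − k`), so the sums are
over `0 ≤ k ≤ a`; `C(i+k−1, 2k−1)` is `0` when `k = 0` since `2k−1 = −1 < 0`. -/
theorem choose_sum_two_ways (a i : ℕ) (ha : 0 < a) (hi : 0 < i) :
    (((3 * a + i).choose (a + i) : ℚ) =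
      ∑ k ∈ Finset.range (a + 1),
        ((i : ℚ) + 3 * k) / ((i : ℚ) + k) * (i + k).choose (2 * k) *
          (3 * a + i).choose (a - k)) ∧
    (((3 * a + i).choose (a + i) : ℚ) =
      ∑ k ∈ Finset.range (a + 1),
        (((i + k).choose (2 * k) : ℚ) +
            (chooseI ((i : ℤ) + k - 1) (2 * (k : ℤ) - 1) : ℚ)) *
          (3 * a + i).choose (a - k)) := by
  have hmain := ChooseSumAux.main i hi a ha
  unfold ChooseSumAux.Dq at hmain
  constructor
  · rw [← hmain]
    refine Finset.sum_congr rfl fun k hk => ?_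
    by_cases hk0 : k = 0
    · subst hk0
      rw [ChooseSumAux.chooseI_neg (show 2*((0:ℕ):ℤ)-1 < 0 by norm_num)]
      have : ((i:ℚ)+3*((0:ℕ):ℚ))/((i:ℚ)+((0:ℕ):ℚ)) = 1 := by
        rw [div_eq_one_iff_eq (by push_cast; positivity)]
        push_cast; ring
      rw [this]
      push_cast
      ring
    · have hk1 : 1 ≤ k := by omega
      have e : chooseI ((i:ℤ)+k-1) (2*(k:ℤ)-1) = ((i+k-1).choose (2*k-1) : ℤ) :=
        ChooseSumAux.chooseI_eq _ _ (by omega) (by omega)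
      rw [e]
      have hnat := Nat.add_one_mul_choose_eq (i+k-1) (2*k-1)
      rw [show i+k-1+1 = i+k from by omega, show 2*k-1+1 = 2*k from by omega] at hnat
      have h' := congrArg (fun x : ℕ => (x:ℚ)) hnat
      push_cast at h'
      have hik : (i:ℚ)+(k:ℚ) ≠ 0 := by positivity
      field_simp
      linear_combination ((3*a+i).choose (a-k) : ℚ) * h'
  · exact hmain.symm
end

section
/- For all positive integers a and i, one has C(3a+i, a+i) − C(3a+2i, a) = ∑_{k≥1} c_k(i) · C(3a+i, a−k), where c_k(i) = ((i+3k)/(i+k)) · C(i+k, 2k) − C(i, k). -/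
/-- Core WZ-certificate identity, over pure rationals. -/
lemma core_cert (M K I B0 B1 B3 B4 B5 E0 E2 D : ℚ)
    (hM : 0 ≤ M) (hK : 0 ≤ K) (hI : 1 ≤ I)
    (h1 : (2*M+3*K+I+1) * B1 = (3*M+3*K+I+1) * B0)
    (h2 : (2*M+3*K+I+2) * B3 = (3*M+3*K+I+2) * B1)
    (h3 : (M+1) * B4 = (3*M+3*K+I+2) * B1)
    (h4 : (M+1) * B5 = (3*M+3*K+I+3) * B3)
    (h5 : (2*K+2)*(2*K+1) * E2 = (I+K+1)*(I-K) * E0)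
    (h6 : (I+K) * D = (I+3*K) * E0) :
    (2*(M+K)+1)*(2*(M+K)+2)*(M+K+I+1) * D * B5
      + (3*M+3*K+I+3)*(2*K+2)*(2*K+1) * E2 * B3
    = (3*M+3*K+I+1)*(3*M+3*K+I+2)*(3*M+3*K+I+3) * D * B0
      + (3*M+3*K+I+3)*(2*K)*(2*K-1) * E0 * B4 := by
  have d1 : (2*M+3*K+I+1) ≠ 0 := by nlinarith
  have d2 : (2*M+3*K+I+2) ≠ 0 := by nlinarith
  have d3 : (M+1) ≠ 0 := by nlinarith
  have d4 : ((2*K+2)*(2*K+1)) ≠ 0 := by positivity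
  have d5 : (I+K) ≠ 0 := by nlinarith
  have e1 : B1 = (3*M+3*K+I+1) * B0 / (2*M+3*K+I+1) := by
    field_simp; linarith [h1]
  subst e1
  have e3 : B3 = (3*M+3*K+I+2) * ((3*M+3*K+I+1) * B0 / (2*M+3*K+I+1)) / (2*M+3*K+I+2) := by
    field_simp at h2 ⊢; linarith [h2]
  subst e3
  have e4 : B4 = (3*M+3*K+I+2) * ((3*M+3*K+I+1) * B0 / (2*M+3*K+I+1)) / (M+1) := by
    field_simp at h3 ⊢; linarith [h3]
  subst e4
  have e5 : B5 = (3*M+3*K+I+3) * ((3*M+3*K+I+2) * ((3*M+3*K+I+1) * B0 / (2*M+3*K+I+1)) / (2*M+3*K+I+2)) / (M+1) := by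
    field_simp at h4 ⊢; linarith [h4]
  subst e5
  have e6 : E2 = (I+K+1)*(I-K) * E0 / ((2*K+2)*(2*K+1)) := by
    field_simp; linarith [h5]
  subst e6
  have e7 : D = (I+3*K) * E0 / (I+K) := by
    field_simp; linarith [h6]
  subst e7
  field_simp
  ring


lemma key_step (i m k : ℕ) (hi : 0 < i) :
    (2*((m:ℚ)+k)+1)*(2*((m:ℚ)+k)+2)*((m:ℚ)+k+i+1)
        * (((i:ℚ)+3*k)/((i:ℚ)+k) * ((i+k).choose (2*k) : ℚ)
            * ((3*(m+k)+i+3).choose (m+1) : ℚ))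
      + (3*(m:ℚ)+3*k+i+3)*(2*(k:ℚ)+2)*(2*(k:ℚ)+1)
        * ((i+k+1).choose (2*k+2) : ℚ) * ((3*(m+k)+i+2).choose m : ℚ)
    = (3*(m:ℚ)+3*k+i+1)*(3*(m:ℚ)+3*k+i+2)*(3*(m:ℚ)+3*k+i+3)
        * (((i:ℚ)+3*k)/((i:ℚ)+k) * ((i+k).choose (2*k) : ℚ)
            * ((3*(m+k)+i).choose m : ℚ))
      + (3*(m:ℚ)+3*k+i+3)*(2*(k:ℚ))*(2*(k:ℚ)-1)
        * ((i+k).choose (2*k) : ℚ) * ((3*(m+k)+i+2).choose (m+1) : ℚ) := by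
  have hIK : ((i:ℚ)+k) ≠ 0 := by positivity
  have hIq : (1:ℚ) ≤ (i:ℚ) := by exact_mod_cast hi
  -- h1
  have hN1 := Nat.choose_mul_succ_eq (3*(m+k)+i) m
  rw [show 3*(m+k)+i+1-m = 2*m+3*k+i+1 from by omega] at hN1
  have h1q := congrArg (fun x : ℕ => (x : ℚ)) hN1
  push_cast at h1q
  have h1 : (2*(m:ℚ)+3*(k:ℚ)+(i:ℚ)+1) * ((3*(m+k)+i+1).choose m : ℚ)
      = (3*(m:ℚ)+3*(k:ℚ)+(i:ℚ)+1) * ((3*(m+k)+i).choose m : ℚ) := by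
    linear_combination -h1q
  -- h2
  have hN2 := Nat.choose_mul_succ_eq (3*(m+k)+i+1) m
  rw [show 3*(m+k)+i+1+1-m = 2*m+3*k+i+2 from by omega] at hN2
  have h2q := congrArg (fun x : ℕ => (x : ℚ)) hN2
  push_cast at h2q
  have h2 : (2*(m:ℚ)+3*(k:ℚ)+(i:ℚ)+2) * ((3*(m+k)+i+2).choose m : ℚ)
      = (3*(m:ℚ)+3*(k:ℚ)+(i:ℚ)+2) * ((3*(m+k)+i+1).choose m : ℚ) := by
    rw [show 3*(m+k)+i+2 = 3*(m+k)+i+1+1 from by omega]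
    linear_combination -h2q
  -- h3
  have hN3 := Nat.add_one_mul_choose_eq (3*(m+k)+i+1) m
  have h3q := congrArg (fun x : ℕ => (x : ℚ)) hN3
  push_cast [Nat.succ_eq_add_one] at h3q
  have h3 : ((m:ℚ)+1) * ((3*(m+k)+i+2).choose (m+1) : ℚ)
      = (3*(m:ℚ)+3*(k:ℚ)+(i:ℚ)+2) * ((3*(m+k)+i+1).choose m : ℚ) := by
    rw [show 3*(m+k)+i+2 = 3*(m+k)+i+1+1 from by omega]
    linear_combination -h3q
  -- h4
  have hN4 := Nat.add_one_mul_choose_eq (3*(m+k)+i+2) m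
  have h4q := congrArg (fun x : ℕ => (x : ℚ)) hN4
  push_cast [Nat.succ_eq_add_one] at h4q
  have h4 : ((m:ℚ)+1) * ((3*(m+k)+i+3).choose (m+1) : ℚ)
      = (3*(m:ℚ)+3*(k:ℚ)+(i:ℚ)+3) * ((3*(m+k)+i+2).choose m : ℚ) := by
    rw [show 3*(m+k)+i+3 = 3*(m+k)+i+2+1 from by omega]
    linear_combination -h4q
  -- h5
  have h5 : (2*(k:ℚ)+2)*(2*(k:ℚ)+1) * ((i+k+1).choose (2*k+2) : ℚ)
      = ((i:ℚ)+(k:ℚ)+1)*((i:ℚ)-(k:ℚ)) * ((i+k).choose (2*k) : ℚ) := by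
    rcases le_or_gt k i with hki | hki
    · have hA := Nat.add_one_mul_choose_eq (i+k) (2*k+1)
      have hB := Nat.choose_succ_right_eq (i+k) (2*k)
      rw [show i+k-2*k = i-k from by omega] at hB
      have hAq := congrArg (fun x : ℕ => (x : ℚ)) hA
      have hBq := congrArg (fun x : ℕ => (x : ℚ)) hB
      push_cast [Nat.succ_eq_add_one] at hAq
      push_cast [Nat.cast_sub hki] at hBq
      rw [show i+k+1 = (i+k)+1 from rfl, show 2*k+2 = (2*k+1)+1 from by omega]
      linear_combination (-(2*(k:ℚ)+1)) * hAq + ((i:ℚ)+(k:ℚ)+1) * hBq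
    · have hz1 : (i+k).choose (2*k) = 0 := Nat.choose_eq_zero_of_lt (by omega)
      have hz2 : (i+k+1).choose (2*k+2) = 0 := Nat.choose_eq_zero_of_lt (by omega)
      rw [hz1, hz2]
      push_cast
      ring
  -- h6
  have h6 : ((i:ℚ)+(k:ℚ)) * (((i:ℚ)+3*k)/((i:ℚ)+k) * ((i+k).choose (2*k) : ℚ))
      = ((i:ℚ)+3*(k:ℚ)) * ((i+k).choose (2*k) : ℚ) := by
    field_simp
  have CC := core_cert (m:ℚ) (k:ℚ) (i:ℚ)
    ((3*(m+k)+i).choose m : ℚ) ((3*(m+k)+i+1).choose m : ℚ)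
    ((3*(m+k)+i+2).choose m : ℚ) ((3*(m+k)+i+2).choose (m+1) : ℚ)
    ((3*(m+k)+i+3).choose (m+1) : ℚ)
    ((i+k).choose (2*k) : ℚ) ((i+k+1).choose (2*k+2) : ℚ)
    (((i:ℚ)+3*k)/((i:ℚ)+k) * ((i+k).choose (2*k) : ℚ))
    (by positivity) (by positivity) hIq h1 h2 h3 h4 h5 h6
  linear_combination CC


lemma ratio3 (i a : ℕ) :
    (2*(a:ℚ)+1)*(2*(a:ℚ)+2)*((a:ℚ)+(i:ℚ)+1) * ((3*a+i+3).choose (2*a+2) : ℚ)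
    = (3*(a:ℚ)+(i:ℚ)+1)*(3*(a:ℚ)+(i:ℚ)+2)*(3*(a:ℚ)+(i:ℚ)+3) * ((3*a+i).choose (2*a) : ℚ) := by
  have f1 := Nat.add_one_mul_choose_eq (3*a+i) (2*a)
  have f2 := Nat.add_one_mul_choose_eq (3*a+i+1) (2*a+1)
  have f3 := Nat.choose_mul_succ_eq (3*a+i+2) (2*a+2)
  rw [show 3*a+i+2+1-(2*a+2) = a+i+1 from by omega] at f3
  have f1q := congrArg (fun x : ℕ => (x : ℚ)) f1
  have f2q := congrArg (fun x : ℕ => (x : ℚ)) f2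
  have f3q := congrArg (fun x : ℕ => (x : ℚ)) f3
  push_cast [Nat.succ_eq_add_one] at f1q f2q f3q
  rw [show 3*a+i+1+1 = 3*a+i+2 from by omega, show 2*a+1+1 = 2*a+2 from by omega] at f2q
  rw [show 3*a+i+2+1 = 3*a+i+3 from by omega] at f3q
  linear_combination (-(2*(a:ℚ)+1)*(2*(a:ℚ)+2))*f3q + (-(2*(a:ℚ)+1)*(3*(a:ℚ)+(i:ℚ)+3))*f2q
    + (-(3*(a:ℚ)+(i:ℚ)+2)*(3*(a:ℚ)+(i:ℚ)+3))*f1q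

noncomputable def Hf (i a : ℕ) : ℕ → ℚ := fun k =>
  (3*(a:ℚ)+(i:ℚ)+3) * (2*(k:ℚ)) * (2*(k:ℚ)-1) * ((i+k).choose (2*k) : ℚ)
    * ((3*a+i+2).choose (a+1-k) : ℚ)

lemma sumA (i : ℕ) (hi : 0 < i) : ∀ a : ℕ,
    ∑ k ∈ Finset.range (a+1),
      ((i : ℚ) + 3 * k) / ((i : ℚ) + k) * ((i + k).choose (2 * k) : ℚ)
        * ((3 * a + i).choose (a - k) : ℚ)
    = ((3 * a + i).choose (2 * a) : ℚ) := by
  have hine : (i:ℚ) ≠ 0 := Nat.cast_ne_zero.2 (by omega)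
  intro a
  induction a with
  | zero => simp [Finset.sum_range_one, hine]
  | succ a ih =>
    rw [show 3*(a+1)+i = 3*a+i+3 from by omega, show 2*(a+1) = 2*a+2 from by omega]
    have hc1 : ((2*(a:ℚ)+1)*(2*(a:ℚ)+2)*((a:ℚ)+(i:ℚ)+1)) ≠ 0 := by positivity
    apply mul_left_cancel₀ hc1
    have key : ∀ k ∈ Finset.range (a+1),
        (2*(a:ℚ)+1)*(2*(a:ℚ)+2)*((a:ℚ)+(i:ℚ)+1)
          * (((i:ℚ)+3*k)/((i:ℚ)+k) * ((i+k).choose (2*k) : ℚ)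
              * ((3*a+i+3).choose (a+1-k) : ℚ))
        = (3*(a:ℚ)+(i:ℚ)+1)*(3*(a:ℚ)+(i:ℚ)+2)*(3*(a:ℚ)+(i:ℚ)+3)
          * (((i:ℚ)+3*k)/((i:ℚ)+k) * ((i+k).choose (2*k) : ℚ)
              * ((3*a+i).choose (a-k) : ℚ))
          + (Hf i a k - Hf i a (k+1)) := by
      intro k hk
      simp only [Finset.mem_range] at hk
      obtain ⟨m, rfl⟩ : ∃ m, a = m + k := ⟨a - k, by omega⟩
      simp only [Hf]
      rw [show m+k+1-k = m+1 from by omega, show m+k-k = m from by omega,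
        show m+k+1-(k+1) = m from by omega, show i+(k+1) = i+k+1 from by omega,
        show 2*(k+1) = 2*k+2 from by omega]
      push_cast
      linear_combination key_step i m k hi
    rw [show a+1+1 = (a+1)+1 from rfl, Finset.sum_range_succ, mul_add, Finset.mul_sum,
      Finset.sum_congr rfl key, Finset.sum_add_distrib, ← Finset.mul_sum, ih,
      Finset.sum_range_sub' (Hf i a) (a+1)]
    have hH0 : Hf i a 0 = 0 := by simp [Hf]
    have hlast : (2*(a:ℚ)+1)*(2*(a:ℚ)+2)*((a:ℚ)+(i:ℚ)+1)
        * (((i:ℚ)+3*(((a:ℕ)+1:ℕ)):ℚ)/((i:ℚ)+(((a:ℕ)+1:ℕ)):ℚ)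
            * ((i+(a+1)).choose (2*(a+1)) : ℚ) * ((3*a+i+3).choose (a+1-(a+1)) : ℚ))
        = Hf i a (a+1) := by
      simp only [Hf]
      rw [show a+1-(a+1) = 0 from by omega, Nat.choose_zero_right, Nat.choose_zero_right]
      have hne : (i:ℚ)+((a:ℚ)+1) ≠ 0 := by positivity
      push_cast
      rw [show i+(a+1) = i+a+1 from by omega, show 2*(a+1) = 2*a+2 from by omega]
      field_simp
      ring
    rw [hH0]
    linear_combination hlast - ratio3 i a


lemma vand_part (i a : ℕ) :
    ((3*a+2*i).choose a : ℚ)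
    = ∑ k ∈ Finset.range (a+1), (i.choose k : ℚ) * ((3*a+i).choose (a-k) : ℚ) := by
  have h := Nat.add_choose_eq i (3*a+i) a
  rw [Finset.Nat.sum_antidiagonal_eq_sum_range_succ_mk] at h
  rw [show i+(3*a+i) = 3*a+2*i from by omega] at h
  have hq := congrArg (fun x : ℕ => (x : ℚ)) h
  push_cast at hq
  exact hq

lemma split_sum (a : ℕ) (f : ℕ → ℚ) :
    ∑ k ∈ Finset.range (a+1), f k = f 0 + ∑ k ∈ Finset.Icc 1 a, f k := by
  rw [Finset.range_eq_Ico, Finset.sum_eq_sum_Ico_succ_bot (by omega : 0 < a+1)]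
  congr 1




/-- For positive integers `a`, `i`:
`C(3a+i, a+i) − C(3a+2i, a) = ∑_{k ≥ 1} c_k(i) · C(3a+i, a−k)` where
`c_k(i) = ((i+3k)/(i+k)) · C(i+k, 2k) − C(i, k)`.
Terms with `k > a` vanish (negative lower index `a − k`), so the sum is over
`1 ≤ k ≤ a`. -/
theorem choose_diff_as_sum (a i : ℕ) (ha : 0 < a) (hi : 0 < i) :
    ((3 * a + i).choose (a + i) : ℚ) - (3 * a + 2 * i).choose a =
      ∑ k ∈ Finset.Icc 1 a,
        (((i : ℚ) + 3 * k) / ((i : ℚ) + k) * (i + k).choose (2 * k)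
            - (i.choose k : ℚ)) *
          (3 * a + i).choose (a - k) := by
  have hine : (i:ℚ) ≠ 0 := Nat.cast_ne_zero.2 (by omega)
  have hsym : (3*a+i).choose (a+i) = (3*a+i).choose (2*a) := by
    rw [← Nat.choose_symm (show a+i ≤ 3*a+i by omega),
      show 3*a+i-(a+i) = 2*a from by omega]
  rw [hsym]
  have hrhs : ∑ k ∈ Finset.Icc 1 a,
        (((i : ℚ) + 3 * k) / ((i : ℚ) + k) * (i + k).choose (2 * k)
            - (i.choose k : ℚ)) * (3 * a + i).choose (a - k)
      = (∑ k ∈ Finset.Icc 1 a,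
          ((i : ℚ) + 3 * k) / ((i : ℚ) + k) * ((i + k).choose (2 * k) : ℚ)
            * ((3 * a + i).choose (a - k) : ℚ))
        - ∑ k ∈ Finset.Icc 1 a, (i.choose k : ℚ) * ((3 * a + i).choose (a - k) : ℚ) := by
    rw [← Finset.sum_sub_distrib]
    apply Finset.sum_congr rfl
    intros
    ring
  rw [hrhs]
  have h1 := sumA i hi a
  rw [split_sum a _] at h1
  have h2 := vand_part i a
  rw [split_sum a _] at h2
  simp only [Nat.cast_zero, mul_zero, add_zero, Nat.add_zero, Nat.mul_zero,
    Nat.choose_zero_right, Nat.sub_zero, Nat.cast_one, mul_one, one_mul,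
    div_self hine] at h1 h2
  linear_combination -h1 - h2
end

section
/- For all integers i, k ≥ 1, the coefficient c_k(i) = ((i+3k)/(i+k)) · C(i+k, 2k) − C(i, k) is non-negative. -/
/-- For integers `i, k ≥ 1`, the coefficient
`c_k(i) = ((i+3k)/(i+k)) · C(i+k, 2k) − C(i, k)` is non-negative. -/
theorem c_nonneg (i k : ℕ) (hi : 1 ≤ i) (hk : 1 ≤ k) :
    0 ≤ ((i : ℚ) + 3 * k) / ((i : ℚ) + k) * (i + k).choose (2 * k)
          - (i.choose k : ℚ) := by
  have h1 : i.choose k ≤ (i + k).choose (2 * k) := by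
    rw [Nat.add_choose_eq]
    have hmem : (k, k) ∈ Finset.HasAntidiagonal.antidiagonal (2 * k) := by
      simp [two_mul]
    calc i.choose k = i.choose (k, k).1 * k.choose (k, k).2 := by simp
      _ ≤ ∑ ij ∈ Finset.HasAntidiagonal.antidiagonal (2 * k), i.choose ij.1 * k.choose ij.2 :=
        Finset.single_le_sum (f := fun ij => i.choose ij.1 * k.choose ij.2)
          (fun _ _ => Nat.zero_le _) hmem
  have hq : ((i : ℚ) + k) * i.choose k ≤ ((i : ℚ) + 3 * k) * (i + k).choose (2 * k) := by
    have := Nat.mul_le_mul (show i + k ≤ i + 3 * k by omega) h1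
    exact_mod_cast this
  have hpos : (0 : ℚ) < (i : ℚ) + k := by positivity
  rw [sub_nonneg, div_mul_eq_mul_div, le_div_iff₀ hpos]
  linarith
end

section
/- For all integers 0 < a < b, one has the binomial coefficient inequality C(b+2a, b) ≥ C(a+2b, a). -/
lemma bergeron_fact_ineq (a : ℕ) : ∀ b, a ≤ b →
    (a + 2 * b).factorial * b.factorial * (2 * a).factorial ≤
    (b + 2 * a).factorial * a.factorial * (2 * b).factorial := by
  intro b hb
  induction b, hb using Nat.le_induction with
  | base => exact le_refl _
  | succ b hb ih =>
    have h1 : a + 2 * (b + 1) = (a + 2 * b + 1) + 1 := by ring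
    have h2 : 2 * (b + 1) = (2 * b + 1) + 1 := by ring
    have h3 : (b + 1) + 2 * a = (b + 2 * a) + 1 := by ring
    rw [h1, h2, h3, Nat.factorial_succ, Nat.factorial_succ, Nat.factorial_succ,
      Nat.factorial_succ, Nat.factorial_succ]
    have hcoef : (a + 2 * b + 1 + 1) * (a + 2 * b + 1) * (b + 1) ≤
        (b + 2 * a + 1) * ((2 * b + 1 + 1) * (2 * b + 1)) := by nlinarith [Nat.mul_le_mul_left a hb]
    calc (a + 2 * b + 1 + 1) * ((a + 2 * b + 1) * (a + 2 * b).factorial) *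
            ((b + 1) * b.factorial) * (2 * a).factorial
        = ((a + 2 * b + 1 + 1) * (a + 2 * b + 1) * (b + 1)) *
            ((a + 2 * b).factorial * b.factorial * (2 * a).factorial) := by ring
      _ ≤ ((b + 2 * a + 1) * ((2 * b + 1 + 1) * (2 * b + 1))) *
            ((b + 2 * a).factorial * a.factorial * (2 * b).factorial) :=
          Nat.mul_le_mul hcoef ih
      _ = (b + 2 * a + 1) * (b + 2 * a).factorial * a.factorial *
            ((2 * b + 1 + 1) * ((2 * b + 1) * (2 * b).factorial)) := by ring

/-- The `β = 2`, `q = 1` case of Bergeron's inequality: for `0 < a < b`,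
`C(b+2a, b) ≥ C(a+2b, a)`. -/
theorem bergeron_beta_two_q_one (a b : ℕ) (ha : 0 < a) (hab : a < b) :
    (a + 2 * b).choose a ≤ (b + 2 * a).choose b := by
  have hfact := bergeron_fact_ineq a b hab.le
  have e1 : (a + 2 * b).choose a * a.factorial * (2 * b).factorial = (a + 2 * b).factorial := by
    have := Nat.choose_mul_factorial_mul_factorial (Nat.le_add_right a (2 * b))
    simpa using this
  have e2 : (b + 2 * a).choose b * b.factorial * (2 * a).factorial = (b + 2 * a).factorial := by
    have := Nat.choose_mul_factorial_mul_factorial (Nat.le_add_right b (2 * a))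
    simpa using this
  have key : (a + 2 * b).choose a * (a.factorial * (2 * b).factorial * (b.factorial * (2 * a).factorial)) ≤
      (b + 2 * a).choose b * (a.factorial * (2 * b).factorial * (b.factorial * (2 * a).factorial)) := by
    calc (a + 2 * b).choose a * (a.factorial * (2 * b).factorial * (b.factorial * (2 * a).factorial))
        = (a + 2 * b).factorial * b.factorial * (2 * a).factorial := by rw [← e1]; ring
      _ ≤ (b + 2 * a).factorial * a.factorial * (2 * b).factorial := hfact
      _ = (b + 2 * a).choose b * (a.factorial * (2 * b).factorial * (b.factorial * (2 * a).factorial)) := by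
          rw [← e2]; ring
  exact Nat.le_of_mul_le_mul_right key (by positivity)
end

section
/- For all integers i ≥ k ≥ 0, one has the polynomial identity [i+k choose 2k]_q = [i choose k]_q + ∑_{r=1}^{k} q^{k+r} · [i+r−1 choose k+r]_q. -/
open Finset Polynomial

lemma qbinom_aux (i k : ℕ) : ∀ m, qbinom (i + m) (k + m) =
    qbinom i k + ∑ r ∈ Finset.Icc 1 m, Polynomial.X ^ (k + r) * qbinom (i + r - 1) (k + r)
  | 0 => by simp
  | m + 1 => by
    have h : qbinom (i + (m + 1)) (k + (m + 1)) =
        qbinom (i + m) (k + m) + Polynomial.X ^ (k + m + 1) * qbinom (i + m) (k + m + 1) := by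
      show qbinom (i + m + 1) (k + m + 1) = _
      rw [qbinom]
    rw [h, qbinom_aux i k m, Finset.sum_Icc_succ_top (by omega : 1 ≤ m + 1)]
    have : i + (m + 1) - 1 = i + m := by omega
    rw [this, add_assoc, ← add_assoc k m 1]

/-- For integers `i ≥ k ≥ 0`:
`[i+k choose 2k]_q = [i choose k]_q + ∑_{r=1}^{k} q^{k+r} [i+r−1 choose k+r]_q`. -/
theorem qbinom_cascade (i k : ℕ) (hki : k ≤ i) :
    qbinom (i + k) (2 * k) =
      qbinom i k +
        ∑ r ∈ Finset.Icc 1 k, Polynomial.X ^ (k + r) * qbinom (i + r - 1) (k + r) := by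
  simpa [two_mul] using qbinom_aux i k k
end

section
/- For all integers 0 ≤ k ≤ i, the polynomial [i+k choose i−k]_q − [i choose i−k]_q has non-negative coefficients. -/
open Finset Polynomial

lemma qbinom_coeff_nonneg : ∀ n k m : ℕ, 0 ≤ (qbinom n k).coeff m := by
  intro n
  induction n with
  | zero =>
    intro k m
    cases k with
    | zero => simp [qbinom, Polynomial.coeff_one]; split <;> simp
    | succ k => simp [qbinom]
  | succ n ih =>
    intro k m
    cases k with
    | zero => simp [qbinom, Polynomial.coeff_one]; split <;> simp
    | succ k =>
      rw [qbinom, Polynomial.coeff_add, mul_comm, Polynomial.coeff_mul_X_pow']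
      have h1 := ih k m
      have h2 := ih (k + 1) (m - (k + 1))
      split <;> positivity

lemma qbinom_succ_sub_coeff_nonneg :
    ∀ n k m : ℕ, 0 ≤ (qbinom (n + 1) k - qbinom n k).coeff m := by
  intro n
  induction n with
  | zero =>
    intro k m
    cases k with
    | zero => simp [qbinom]
    | succ k =>
      have : qbinom 0 (k + 1) = 0 := by simp [qbinom]
      rw [this, sub_zero]
      exact qbinom_coeff_nonneg _ _ _
  | succ n ih =>
    intro k m
    cases k with
    | zero =>
      simp [qbinom]
    | succ k =>
      have hrec : qbinom (n + 2) (k + 1) - qbinom (n + 1) (k + 1)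
          = (qbinom (n + 1) k - qbinom n k)
            + Polynomial.X ^ (k + 1) * (qbinom (n + 1) (k + 1) - qbinom n (k + 1)) := by
        rw [show qbinom (n + 2) (k + 1)
            = qbinom (n + 1) k + Polynomial.X ^ (k + 1) * qbinom (n + 1) (k + 1) by rw [qbinom],
          show qbinom (n + 1) (k + 1)
            = qbinom n k + Polynomial.X ^ (k + 1) * qbinom n (k + 1) by rw [qbinom]]
        ring
      rw [hrec, Polynomial.coeff_add, mul_comm, Polynomial.coeff_mul_X_pow']
      have h1 := ih k m
      have h2 := ih (k + 1) (m - (k + 1))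
      split <;> positivity

lemma qbinom_add_sub_coeff_nonneg :
    ∀ a n k m : ℕ, 0 ≤ (qbinom (n + a) k - qbinom n k).coeff m := by
  intro a
  induction a with
  | zero => intro n k m; simp
  | succ a ih =>
    intro n k m
    have key : qbinom (n + (a + 1)) k - qbinom n k
        = (qbinom (n + a + 1) k - qbinom (n + a) k) + (qbinom (n + a) k - qbinom n k) := by
      rw [show n + (a + 1) = n + a + 1 from rfl]; ring
    rw [key, Polynomial.coeff_add]
    have h1 := qbinom_succ_sub_coeff_nonneg (n + a) k m
    have h2 := ih n k m
    positivity

/-- For integers `0 ≤ k ≤ i`, the polynomial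
`[i+k choose i−k]_q − [i choose i−k]_q` has non-negative coefficients. -/
theorem qbinom_diff_nonneg (i k : ℕ) (hki : k ≤ i) (m : ℕ) :
    0 ≤ (qbinom (i + k) (i - k) - qbinom i (i - k)).coeff m := by
  exact qbinom_add_sub_coeff_nonneg k i (i - k) m
end
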